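/- Fix a block size B, a parameter set Θ and, for each dimension N that is a multiple of B (with M = N/B blocks), a family F_{N,ε} of Borel probability measures on ℝ^N satisfying: (i) if ν_B ∈ F_{B,ε}, then the M-fold product measure ν_B × ⋯ × ν_B (viewing ℝ^N as (ℝ^B)^M) belongs to F_{N,ε}; and (ii) if ν_N ∈ F_{N,ε}, then the average of its B-dimensional block marginals ν̄_N = M⁻¹ Σ_{i=1}^M ν_{N,i} belongs to F_{B,ε}. Let η be a block-separable denoiser, i.e. η(x;τ) = (η_B(block₁(x);τ), …, η_B(block_M(x);τ)) for a measurable map η_B(·;τ): ℝ^B → ℝ^B, τ ∈ Θ, where block_m(x) = (x_{(m−1)B+1}, …, x_{mB}). Then for every N that is a multiple of B, M(F_{N,ε}|η) = M(F_{B,ε}|η_B). -/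

import Mathlib

/-!
The squared error of a block-separable denoiser is a sum of per-block errors, and the Gaussian
noise is independent across blocks, so the risk of `ν` on `(ℝ^B)^M` is `M` times the
single-block risk of the average `ν̄` of its block marginals. Hence the `M`-block supremum over
`F M` is `M` times the single-block supremum over `{ν̄ | ν ∈ F M}`, and that set is exactly `FB`:
it lies in `FB` by (ii), and contains every `νB ∈ FB` as the average marginal of `νB^⊗M` by (i).
-/

open MeasureTheory ProbabilityTheory ENNReal

noncomputable section

def stdGaussian (B : ℕ) : Measure (Fin B → ℝ) :=
  Measure.pi fun _ => gaussianReal 0 1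

instance (B : ℕ) : IsProbabilityMeasure (stdGaussian B) := by
  unfold _root_.stdGaussian; infer_instance

namespace MeasureTheory.Measure

variable {α β ι : Type*} [MeasurableSpace α] [MeasurableSpace β] [Fintype ι]

def avgMarginal {M : ℕ} (ν : Measure (Fin M → α)) : Measure α :=
  (M : ℝ≥0∞)⁻¹ • ∑ m : Fin M, ν.map (fun x => x m)

theorem avgMarginal_pi {M : ℕ} (hM : 0 < M) (μ : Measure α) [IsProbabilityMeasure μ] :
    avgMarginal (Measure.pi fun _ : Fin M => μ) = μ := by
  have hM₀ : (M : ℝ≥0∞) ≠ 0 := Nat.cast_ne_zero.mpr hM.ne'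
  have hmarg (m : Fin M) : (Measure.pi fun _ : Fin M => μ).map (fun x => x m) = μ :=
    (measurePreserving_eval (fun _ : Fin M => μ) m).map_eq
  rw [avgMarginal, Finset.sum_congr rfl fun m _ => hmarg m, Finset.sum_const, Finset.card_univ,
    Fintype.card_fin, ← Nat.cast_smul_eq_nsmul ℝ≥0∞, smul_smul,
    ENNReal.inv_mul_cancel hM₀ (natCast_ne_top M), one_smul]

theorem lintegral_avgMarginal {M : ℕ} (hM : 0 < M) (ν : Measure (Fin M → α)) (f : α → ℝ≥0∞) :
    M * ∫⁻ x, f x ∂(avgMarginal ν) = ∑ m : Fin M, ∫⁻ x, f x ∂(ν.map (fun x => x m)) := by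
  rw [avgMarginal, lintegral_smul_measure, lintegral_finsetSum_measure, smul_eq_mul,
    ← mul_assoc, ENNReal.mul_inv_cancel (Nat.cast_ne_zero.mpr hM.ne') (natCast_ne_top M),
    one_mul]

theorem lintegral_prod_pi_comp_eval {f : α × β → ℝ≥0∞} (hf : Measurable f)
    (ν : Measure (ι → α)) (γ : Measure β) [IsProbabilityMeasure γ] (i : ι) :
    ∫⁻ p, f (p.1 i, p.2 i) ∂(ν.prod (Measure.pi fun _ => γ)) =
      ∫⁻ p, f p ∂((ν.map (fun x => x i)).prod γ) := by
  have hrisk : Measurable fun x => ∫⁻ z, f (x, z) ∂γ := hf.lintegral_prod_right'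
  rw [lintegral_prod (fun p : (ι → α) × (ι → β) => f (p.1 i, p.2 i))
      (hf.comp (by fun_prop)).aemeasurable,
    lintegral_prod _ hf.aemeasurable, lintegral_map hrisk (measurable_pi_apply i)]
  congr with x
  exact (measurePreserving_eval (fun _ => γ) i).lintegral_comp (hf.comp measurable_prodMk_left)

theorem lintegral_sum_blocks_prod_pi {f : α × β → ℝ≥0∞} (hf : Measurable f) {M : ℕ}
    (hM : 0 < M) (ν : Measure (Fin M → α)) (γ : Measure β) [IsProbabilityMeasure γ] :
    ∫⁻ p, ∑ m, f (p.1 m, p.2 m) ∂(ν.prod (Measure.pi fun _ => γ)) =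
      M * ∫⁻ p, f p ∂((avgMarginal ν).prod γ) := by
  rw [lintegral_finsetSum (f := fun m (p : (Fin M → α) × (Fin M → β)) => f (p.1 m, p.2 m)) _
      fun m _ => hf.comp (by fun_prop),
    lintegral_prod _ hf.aemeasurable, lintegral_avgMarginal hM]
  refine Finset.sum_congr rfl fun m _ => ?_
  rw [lintegral_prod_pi_comp_eval hf, lintegral_prod _ hf.aemeasurable]

end MeasureTheory.Measure

open Measure

def sqError {ι : Type*} [Fintype ι] (η : (ι → ℝ) → ι → ℝ) (q : (ι → ℝ) × (ι → ℝ)) : ℝ≥0∞ :=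
  ENNReal.ofReal (∑ j, (q.1 j - η (fun j' => q.1 j' + q.2 j') j) ^ 2)

theorem measurable_sqError {ι : Type*} [Fintype ι] {η : (ι → ℝ) → ι → ℝ} (hη : Measurable η) :
    Measurable (sqError η) := by
  unfold sqError; fun_prop

theorem ofReal_sum_blocks_eq_sum_sqError {ι κ : Type*} [Fintype ι] [Fintype κ]
    (η : (ι → ℝ) → ι → ℝ) (p : (κ → ι → ℝ) × (κ → ι → ℝ)) :
    ENNReal.ofReal (∑ m, ∑ j, (p.1 m j - η (fun j' => p.1 m j' + p.2 m j') j) ^ 2) =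
      ∑ m, sqError η (p.1 m, p.2 m) :=
  ENNReal.ofReal_sum_of_nonneg fun _ _ => Finset.sum_nonneg fun _ _ => sq_nonneg _

theorem block_separable_minimax_mse_general
    {Θ : Type*} (B : ℕ)
    (ηB : Θ → (Fin B → ℝ) → (Fin B → ℝ))
    (hmeas : ∀ τ : Θ, Measurable (ηB τ))
    (F : (M : ℕ) → Set (Measure (Fin M → Fin B → ℝ)))
    (FB : Set (Measure (Fin B → ℝ)))
    (hprobB : ∀ ν ∈ FB, IsProbabilityMeasure ν)
    -- (i) products of a single-block member belong to the `M`-block family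
    (hprod : ∀ (M : ℕ) (νB : Measure (Fin B → ℝ)), νB ∈ FB →
      Measure.pi (fun _ : Fin M => νB) ∈ F M)
    -- (ii) the average of the block marginals belongs to the single-block family
    (hmarg : ∀ (M : ℕ), 0 < M → ∀ ν ∈ F M,
      ((M : ℝ≥0∞)⁻¹ • ∑ m : Fin M, Measure.map (fun x => x m) ν) ∈ FB)
    (M : ℕ) (hM : 0 < M) :
    ((M * B : ℕ) : ℝ≥0∞)⁻¹ *
      ⨅ τ : Θ, ⨆ ν ∈ F M,
        ∫⁻ p, ENNReal.ofReal
            (∑ m, ∑ j, (p.1 m j - ηB τ (fun j' => p.1 m j' + p.2 m j') j) ^ 2)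
          ∂(ν.prod (Measure.pi fun _ : Fin M => stdGaussian B)) =
    (B : ℝ≥0∞)⁻¹ *
      ⨅ τ : Θ, ⨆ ν ∈ FB,
        ∫⁻ p, ENNReal.ofReal (∑ j, (p.1 j - ηB τ (fun j' => p.1 j' + p.2 j') j) ^ 2)
          ∂(ν.prod (stdGaussian B)) := by
  have hM₀ : (M : ℝ≥0∞) ≠ 0 := Nat.cast_ne_zero.mpr hM.ne'
  have himage : avgMarginal '' F M = FB := by
    refine Set.SurjOn.image_eq_of_mapsTo (fun νB hνB => ?_) (fun ν hν => hmarg M hM ν hν)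
    have := hprobB νB hνB
    exact ⟨_, hprod M νB hνB, avgMarginal_pi hM νB⟩
  have hsup : ∀ τ, ⨆ ν ∈ F M, ∫⁻ p, ∑ m, sqError (ηB τ) (p.1 m, p.2 m)
      ∂(ν.prod (Measure.pi fun _ : Fin M => stdGaussian B)) =
      M * ⨆ ν ∈ FB, ∫⁻ p, sqError (ηB τ) p ∂(ν.prod (stdGaussian B)) := fun τ => by
    simp_rw [lintegral_sum_blocks_prod_pi (measurable_sqError (hmeas τ)) hM, ENNReal.mul_iSup,
      ← himage, iSup_image]
  simp_rw [ofReal_sum_blocks_eq_sum_sqError, hsup,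
    ← ENNReal.mul_iInf_of_ne hM₀ (natCast_ne_top M)]
  rw [Nat.cast_mul, ENNReal.mul_inv (.inl hM₀) (.inl (natCast_ne_top M)),
    mul_comm _ (B : ℝ≥0∞)⁻¹, mul_assoc, ENNReal.inv_mul_cancel_left hM₀ (natCast_ne_top M)]
  rfl

/-- **Minimax MSE of a block-separable denoiser.**
We view `ℝ^N` with `N = M*B` as `(ℝ^B)^M`, i.e. as `Fin M → Fin B → ℝ`; the
`m`-th block of `x` is `x m`.  If the family `F M` of probability measures on
`(ℝ^B)^M` contains products of any member of the single-block family `FB` (i),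
and the average of the block marginals of any member of `F M` lies in `FB`
(ii), then for any block-separable denoiser built from `ηB : ℝ^B → ℝ^B` the
minimax MSE in dimension `N = M*B` equals the single-block minimax MSE. -/
theorem block_separable_minimax_mse
    {Θ : Type*} (B : ℕ) (hB : 0 < B)
    (ηB : Θ → (Fin B → ℝ) → (Fin B → ℝ))
    (hmeas : ∀ τ : Θ, Measurable (ηB τ))
    (F : (M : ℕ) → Set (Measure (Fin M → Fin B → ℝ)))
    (FB : Set (Measure (Fin B → ℝ)))
    (hprob : ∀ M : ℕ, ∀ ν ∈ F M, IsProbabilityMeasure ν)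
    (hprobB : ∀ ν ∈ FB, IsProbabilityMeasure ν)
    -- (i) products of a single-block member belong to the `M`-block family
    (hprod : ∀ (M : ℕ) (νB : Measure (Fin B → ℝ)), νB ∈ FB →
      Measure.pi (fun _ : Fin M => νB) ∈ F M)
    -- (ii) the average of the block marginals belongs to the single-block family
    (hmarg : ∀ (M : ℕ), 0 < M → ∀ ν ∈ F M,
      ((M : ℝ≥0∞)⁻¹ • ∑ m : Fin M, Measure.map (fun x => x m) ν) ∈ FB)
    (M : ℕ) (hM : 0 < M) :
    ((M * B : ℕ) : ℝ≥0∞)⁻¹ *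
      ⨅ τ : Θ, ⨆ ν ∈ F M,
        ∫⁻ p, ENNReal.ofReal
            (∑ m, ∑ j, (p.1 m j - ηB τ (fun j' => p.1 m j' + p.2 m j') j) ^ 2)
          ∂(ν.prod (Measure.pi fun _ : Fin M => stdGaussian B)) =
    (B : ℝ≥0∞)⁻¹ *
      ⨅ τ : Θ, ⨆ ν ∈ FB,
        ∫⁻ p, ENNReal.ofReal (∑ j, (p.1 j - ηB τ (fun j' => p.1 j' + p.2 j') j) ^ 2)
          ∂(ν.prod (stdGaussian B)) :=
  block_separable_minimax_mse_general B ηB hmeas F FB hprobB hprod hmarg M hM
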